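/- If a family F of m-element sets has property P, then F contains no m+1 disjointly representable sets, and consequently |F| ≤ C(2m, m). -/

import Mathlib

/-!
Property P applied to `m + 1` disjointly representable members would give one of them a
private part of size at most `⌊m / (m + 1)⌋ = 0`, which is impossible.

For the bound, give each `A ∈ F` a minimal set `T_A` disjoint from `A` that meets every other
member of `F`. Minimality gives every `t ∈ T_A` a member `A'` with `A' ∩ T_A = {t}`; these members
are disjointly representable, so `|T_A| ≤ m`. The pairs `(A, T_A)` then form a Bollobás set-pair
system, and Bollobás' inequality `∑ 1 / C(|A_i| + |B_i|, |A_i|) ≤ 1` yields `|F| ≤ C(2m, m)`.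
That inequality is proved by induction on the ground set `X`: for each `x ∈ X`, the pairs
`(A_i, B_i \ {x})` with `x ∉ A_i` form a system on `X \ {x}`, and summing over `x` recovers
`|X|` times the original sum.
-/

def DisjRep {α : Type*} {k : ℕ} (A : Fin k → Finset α) : Prop :=
  ∃ x : Fin k → α, ∀ i j, x i ∈ A j ↔ i = j

open Finset

section Bollobas

variable {α ι : Type*} [DecidableEq α]

lemma add_one_mul_inv_choose (a b : ℕ) :
    (b + 1 : ℚ) * ((a + b).choose a : ℚ)⁻¹ = (a + b + 1) * ((a + (b + 1)).choose a : ℚ)⁻¹ := by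
  have key := Nat.add_one_mul_choose_eq (a + b) b
  rw [← Nat.choose_symm_add, add_assoc a b 1, ← Nat.choose_symm_add] at key
  have h₁ : ((a + b).choose a : ℚ) ≠ 0 := by exact_mod_cast (Nat.choose_pos (by omega)).ne'
  have h₂ : ((a + (b + 1)).choose a : ℚ) ≠ 0 := by exact_mod_cast (Nat.choose_pos (by omega)).ne'
  field_simp
  have keyℚ : ((a + (b + 1) : ℕ) : ℚ) * (a + b).choose a = (a + (b + 1)).choose a * (b + 1) := by
    exact_mod_cast key
  push_cast at keyℚ
  linarith

lemma sum_sdiff_inv_choose_card_erase {X A B : Finset α} (hAB : Disjoint A B) (hsub : A ∪ B ⊆ X)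
    (hB : B.Nonempty) :
    ∑ x ∈ X \ A, ((#A + #(B.erase x)).choose #A : ℚ)⁻¹ = #X * ((#A + #B).choose #A : ℚ)⁻¹ := by
  obtain ⟨b, hb⟩ : ∃ b, #B = b + 1 := Nat.exists_eq_add_one.2 hB.card_pos
  have hsplit : X \ A = B ∪ X \ (A ∪ B) := by
    ext x; simp only [mem_sdiff, mem_union]
    constructor
    · tauto
    · rintro (hx | hx)
      · exact ⟨hsub (mem_union_right _ hx), disjoint_right.1 hAB hx⟩
      · tauto
  have hcard : #(X \ (A ∪ B)) + #A + #B = #X := by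
    have := card_le_card hsub
    rw [card_union_of_disjoint hAB] at this
    rw [card_sdiff_of_subset hsub, card_union_of_disjoint hAB]
    omega
  have hB_sum : ∑ x ∈ B, ((#A + #(B.erase x)).choose #A : ℚ)⁻¹
      = (b + 1) * ((#A + b).choose #A : ℚ)⁻¹ := by
    rw [sum_congr rfl fun x hx => by rw [card_erase_of_mem hx, hb, Nat.add_sub_cancel], sum_const,
      hb, nsmul_eq_mul]
    push_cast; rfl
  have hrest_sum : ∑ x ∈ X \ (A ∪ B), ((#A + #(B.erase x)).choose #A : ℚ)⁻¹
      = #(X \ (A ∪ B)) * ((#A + #B).choose #A : ℚ)⁻¹ := by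
    rw [sum_congr rfl fun x hx => by
      rw [erase_eq_of_notMem fun h => (mem_sdiff.1 hx).2 (mem_union_right _ h)], sum_const,
      nsmul_eq_mul]
  rw [hsplit, sum_union (disjoint_sdiff.mono_left subset_union_right), hB_sum, hrest_sum,
    add_one_mul_inv_choose, ← hcard, hb]
  push_cast
  ring

lemma sum_inv_choose_le_one_of_card_le_one {s : Finset ι} (hs : #s ≤ 1) (a b : ι → ℕ) :
    ∑ i ∈ s, ((a i + b i).choose (a i) : ℚ)⁻¹ ≤ 1 := by
  have hterm : ∀ i ∈ s, ((a i + b i).choose (a i) : ℚ)⁻¹ ≤ 1 := fun i _ =>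
    inv_le_one_of_one_le₀ (by exact_mod_cast Nat.choose_pos (Nat.le_add_right _ _))
  calc ∑ i ∈ s, ((a i + b i).choose (a i) : ℚ)⁻¹ ≤ #s • (1 : ℚ) := sum_le_card_nsmul _ _ _ hterm
    _ ≤ 1 := by rw [nsmul_eq_mul, mul_one]; exact_mod_cast hs

theorem bollobas_sum_inv_choose_le_one_of_subset (X : Finset α) (s : Finset ι) (A B : ι → Finset α)
    (hsub : ∀ i ∈ s, A i ∪ B i ⊆ X) (hdisj : ∀ i ∈ s, Disjoint (A i) (B i))
    (hcross : ∀ i ∈ s, ∀ j ∈ s, i ≠ j → (A i ∩ B j).Nonempty) :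
    ∑ i ∈ s, ((#(A i) + #(B i)).choose #(A i) : ℚ)⁻¹ ≤ 1 := by
  induction X using Finset.strongInduction generalizing s B with
  | H X ih =>
    by_cases hs : #s ≤ 1
    · exact sum_inv_choose_le_one_of_card_le_one hs _ _
    have hB : ∀ i ∈ s, (B i).Nonempty := fun i hi => by
      obtain ⟨j, hj, hji⟩ := exists_mem_ne (not_le.1 hs) i
      exact (hcross j hj i hi hji).mono inter_subset_right
    have hX : 0 < #X := by
      obtain ⟨i, hi⟩ := card_pos.1 (by omega : 0 < #s)
      exact ((hB i hi).mono (subset_union_right.trans (hsub i hi))).card_pos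
    have hstep : ∀ x ∈ X, ∑ i ∈ s with x ∉ A i,
        ((#(A i) + #((B i).erase x)).choose #(A i) : ℚ)⁻¹ ≤ 1 := by
      intro x hx
      refine ih _ (erase_ssubset hx) _ _ (fun i hi => ?_) (fun i hi => ?_) (fun i hi j hj hij => ?_)
      · rw [mem_filter] at hi
        intro y hy
        rw [mem_erase]
        rcases mem_union.1 hy with hy | hy
        · exact ⟨fun h => hi.2 (h ▸ hy), hsub i hi.1 (mem_union_left _ hy)⟩
        · exact ⟨ne_of_mem_erase hy, hsub i hi.1 (mem_union_right _ (mem_of_mem_erase hy))⟩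
      · exact (hdisj i (mem_filter.1 hi).1).mono_right (erase_subset _ _)
      · obtain ⟨y, hy⟩ := hcross i (mem_filter.1 hi).1 j (mem_filter.1 hj).1 hij
        rw [mem_inter] at hy
        refine ⟨y, mem_inter.2 ⟨hy.1, mem_erase.2 ⟨?_, hy.2⟩⟩⟩
        rintro rfl
        exact (mem_filter.1 hi).2 hy.1
    have hdouble : (#X : ℚ) * ∑ i ∈ s, ((#(A i) + #(B i)).choose #(A i) : ℚ)⁻¹ ≤ #X := calc
      (#X : ℚ) * ∑ i ∈ s, ((#(A i) + #(B i)).choose #(A i) : ℚ)⁻¹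
          = ∑ i ∈ s, ∑ x ∈ X \ A i, ((#(A i) + #((B i).erase x)).choose #(A i) : ℚ)⁻¹ := by
        rw [mul_sum]
        exact sum_congr rfl fun i hi =>
          (sum_sdiff_inv_choose_card_erase (hdisj i hi) (hsub i hi) (hB i hi)).symm
      _ = ∑ x ∈ X, ∑ i ∈ s with x ∉ A i, ((#(A i) + #((B i).erase x)).choose #(A i) : ℚ)⁻¹ :=
        sum_comm' fun i x => by simp only [mem_sdiff, mem_filter]; tauto
      _ ≤ ∑ x ∈ X, 1 := sum_le_sum hstep
      _ = #X := by simp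
    exact le_of_mul_le_mul_left (by rwa [mul_one]) (by exact_mod_cast hX)

theorem bollobas_sum_inv_choose_le_one (s : Finset ι) (A B : ι → Finset α)
    (hdisj : ∀ i ∈ s, Disjoint (A i) (B i))
    (hcross : ∀ i ∈ s, ∀ j ∈ s, i ≠ j → (A i ∩ B j).Nonempty) :
    ∑ i ∈ s, ((#(A i) + #(B i)).choose #(A i) : ℚ)⁻¹ ≤ 1 :=
  bollobas_sum_inv_choose_le_one_of_subset (s.biUnion fun i => A i ∪ B i) s A B
    (fun _ hi => subset_biUnion_of_mem (fun i => A i ∪ B i) hi) hdisj hcross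

theorem bollobas_card_le_choose {a b : ℕ} (s : Finset ι) (A B : ι → Finset α)
    (hA : ∀ i ∈ s, #(A i) ≤ a) (hB : ∀ i ∈ s, #(B i) ≤ b)
    (hdisj : ∀ i ∈ s, Disjoint (A i) (B i))
    (hcross : ∀ i ∈ s, ∀ j ∈ s, i ≠ j → (A i ∩ B j).Nonempty) :
    #s ≤ (a + b).choose a := by
  have hchoose : ∀ i ∈ s, (#(A i) + #(B i)).choose #(A i) ≤ (a + b).choose a := fun i hi => calc
    (#(A i) + #(B i)).choose #(A i) ≤ (#(A i) + b).choose #(A i) :=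
      Nat.choose_le_choose _ (by linarith [hB i hi])
    _ = (#(A i) + b).choose b := Nat.choose_symm_add
    _ ≤ (a + b).choose b := Nat.choose_le_choose _ (by linarith [hA i hi])
    _ = (a + b).choose a := Nat.choose_symm_add.symm
  have hpos : (0 : ℚ) < (a + b).choose a := by exact_mod_cast Nat.choose_pos (Nat.le_add_right _ _)
  have : (#s : ℚ) * ((a + b).choose a : ℚ)⁻¹ ≤ 1 := calc
    (#s : ℚ) * ((a + b).choose a : ℚ)⁻¹ = ∑ i ∈ s, ((a + b).choose a : ℚ)⁻¹ := by
      rw [sum_const, nsmul_eq_mul]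
    _ ≤ ∑ i ∈ s, ((#(A i) + #(B i)).choose #(A i) : ℚ)⁻¹ := sum_le_sum fun i hi =>
      inv_anti₀ (by exact_mod_cast Nat.choose_pos (Nat.le_add_right _ _))
        (by exact_mod_cast hchoose i hi)
    _ ≤ 1 := bollobas_sum_inv_choose_le_one s A B hdisj hcross
  rw [← div_eq_mul_inv, div_le_one hpos] at this
  exact_mod_cast this

end Bollobas

section DisjRep

variable {α : Type*} {k : ℕ}

theorem DisjRep.injective {A : Fin k → Finset α} (h : DisjRep A) : Function.Injective A := by
  obtain ⟨x, hx⟩ := h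
  intro i j hij
  exact (hx i j).1 (hij ▸ (hx i i).2 rfl)

theorem DisjRep.nonempty_sdiff_biUnion [DecidableEq α] {A : Fin k → Finset α} (h : DisjRep A)
    (j : Fin k) : (A j \ (univ.erase j).biUnion A).Nonempty := by
  obtain ⟨x, hx⟩ := h
  refine ⟨x j, mem_sdiff.2 ⟨(hx j j).2 rfl, fun hmem => ?_⟩⟩
  obtain ⟨i, hi, hxi⟩ := mem_biUnion.1 hmem
  exact (mem_erase.1 hi).1 ((hx j i).1 hxi).symm

variable [DecidableEq α]

theorem exists_disjRep_of_inter_eq_singleton {𝒜 : Finset (Finset α)} {T : Finset α}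
    (h : ∀ t ∈ T, ∃ A ∈ 𝒜, A ∩ T = {t}) (hk : k ≤ #T) :
    ∃ g : Fin k → Finset α, (∀ i, g i ∈ 𝒜) ∧ DisjRep g := by
  choose w hw𝒜 hwT using h
  let e : Fin k ↪ T := (Fin.castLEEmb hk).trans T.equivFin.symm.toEmbedding
  refine ⟨fun i => w (e i) (e i).2, fun i => hw𝒜 _ _, fun i => e i, fun i j => ?_⟩
  have hiff : (e i : α) ∈ w (e j) (e j).2 ↔ (e i : α) ∈ w (e j) (e j).2 ∩ T := by
    simp [(e i).2]
  rw [hiff, hwT, mem_singleton, ← Subtype.ext_iff, e.injective.eq_iff]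

theorem exists_inter_eq_singleton_of_minimal {𝒜 : Finset (Finset α)} {T : Finset α} {t : α}
    (hT : ∀ A ∈ 𝒜, (A ∩ T).Nonempty) (hmin : ¬ ∀ A ∈ 𝒜, (A ∩ T.erase t).Nonempty) :
    ∃ A ∈ 𝒜, A ∩ T = {t} := by
  push Not at hmin
  obtain ⟨A, hA, hempty⟩ := hmin
  rw [inter_erase, erase_eq_empty_iff] at hempty
  exact ⟨A, hA, hempty.resolve_left (hT A hA).ne_empty⟩

end DisjRep

section FranklPach

variable {α : Type*} [DecidableEq α] {m : ℕ} {F : Finset (Finset α)}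

theorem exists_transversal_card_le (hcard : ∀ A ∈ F, #A = m)
    (hF : ¬ ∃ g : Fin (m + 1) → Finset α, Function.Injective g ∧ (∀ i, g i ∈ F) ∧ DisjRep g)
    {A : Finset α} (hA : A ∈ F) :
    ∃ T : Finset α, #T ≤ m ∧ Disjoint A T ∧ ∀ A' ∈ F, A' ≠ A → (A' ∩ T).Nonempty := by
  set U := F.biUnion id \ A
  set 𝒯 := U.powerset.filter fun T => ∀ A' ∈ F.erase A, (A' ∩ T).Nonempty
  have hU : U ∈ 𝒯 := by
    refine mem_filter.2 ⟨mem_powerset_self U, fun A' hA' => ?_⟩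
    obtain ⟨hne, hA'F⟩ := mem_erase.1 hA'
    have hnsub : ¬ A' ⊆ A := fun hsub =>
      hne (eq_of_subset_of_card_le hsub (by rw [hcard A hA, hcard A' hA'F]))
    obtain ⟨x, hxA', hxA⟩ := not_subset.1 hnsub
    exact ⟨x, mem_inter.2 ⟨hxA', mem_sdiff.2 ⟨mem_biUnion.2 ⟨A', hA'F, hxA'⟩, hxA⟩⟩⟩
  obtain ⟨T, hT, hmin⟩ := exists_min_image 𝒯 card ⟨U, hU⟩
  obtain ⟨hTU, hTmeets⟩ := mem_filter.1 hT
  refine ⟨T, ?_, disjoint_of_subset_right (mem_powerset.1 hTU) disjoint_sdiff,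
    fun A' hA' hne => hTmeets A' (mem_erase.2 ⟨hne, hA'⟩)⟩
  have hprivate : ∀ t ∈ T, ∃ A' ∈ F.erase A, A' ∩ T = {t} := fun t ht =>
    exists_inter_eq_singleton_of_minimal hTmeets fun hmeets =>
      (card_erase_lt_of_mem ht).not_ge <| hmin _ <|
        mem_filter.2 ⟨mem_powerset.2 ((erase_subset t T).trans (mem_powerset.1 hTU)), hmeets⟩
  by_contra! hbig
  obtain ⟨g, hgF, hg⟩ := exists_disjRep_of_inter_eq_singleton hprivate (hbig : m + 1 ≤ #T)
  exact hF ⟨g, hg.injective, fun i => mem_of_mem_erase (hgF i), hg⟩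

theorem card_le_choose_of_not_exists_disjRep (hcard : ∀ A ∈ F, #A = m)
    (hF : ¬ ∃ g : Fin (m + 1) → Finset α, Function.Injective g ∧ (∀ i, g i ∈ F) ∧ DisjRep g) :
    #F ≤ (2 * m).choose m := by
  choose! T hTcard hTdisj hTmeets using fun A (hA : A ∈ F) => exists_transversal_card_le hcard hF hA
  rw [two_mul]
  exact bollobas_card_le_choose F id T (fun A hA => (hcard A hA).le) hTcard hTdisj
    fun A hA A' hA' hne => hTmeets A' hA' A hA hne

end FranklPach

theorem stmt_3 {α : Type*} [DecidableEq α] (m : ℕ)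
    (F : Finset (Finset α)) (hcard : ∀ A ∈ F, A.card = m)
    (hP : ∀ k : ℕ, 1 ≤ k → ∀ f : Fin k → Finset α, (∀ i, f i ∈ F) →
      ∃ j : Fin k, ((f j) \ (Finset.univ.erase j).biUnion f).card ≤ m / k) :
    (¬ ∃ g : Fin (m + 1) → Finset α,
      Function.Injective g ∧ (∀ i, g i ∈ F) ∧ DisjRep g) ∧
    F.card ≤ Nat.choose (2 * m) m := by
  have hnoDisjRep : ¬ ∃ g : Fin (m + 1) → Finset α,
      Function.Injective g ∧ (∀ i, g i ∈ F) ∧ DisjRep g := by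
    rintro ⟨g, -, hgF, hg⟩
    obtain ⟨j, hj⟩ := hP (m + 1) (Nat.le_add_left 1 m) g hgF
    rw [Nat.div_eq_of_lt (Nat.lt_succ_self m), Nat.le_zero, card_eq_zero] at hj
    exact (hg.nonempty_sdiff_biUnion j).ne_empty hj
  exact ⟨hnoDisjRep, card_le_choose_of_not_exists_disjRep hcard hnoDisjRep⟩
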